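/- Let (X,d) be a complete metric space and T : X → X satisfy d(Tx,Ty) ≤ λ · d(x,y)^α · d(x,Tx)^(1-α) for all x,y ∈ X that are not fixed points of T, with λ ∈ [0,1) and α ∈ (0,1). Then any Picard iteration sequence x_{n+1} = T x_n with all x_n not fixed points satisfies d(x_n,x_{n+1}) ≤ λⁿ d(x₀,x₁) and is Cauchy. -/
import Mathlib


/-- interpolative Berinde weak contractions: geometric decay of
Picard step distances and Cauchyness of the Picard sequence. -/
theorem stmt_7 {X : Type*} [MetricSpace X] [CompleteSpace X]
    (lam α : ℝ) (hlam : 0 ≤ lam ∧ lam < 1) (hα : 0 < α ∧ α < 1)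
    (T : X → X)
    (hT : ∀ x y : X, T x ≠ x → T y ≠ y →
      dist (T x) (T y) ≤ lam * (dist x y) ^ α * (dist x (T x)) ^ (1 - α))
    (x : ℕ → X) (hx : ∀ n : ℕ, x (n + 1) = T (x n))
    (hnf : ∀ n : ℕ, T (x n) ≠ x n) :
    (∀ n : ℕ, dist (x n) (x (n + 1)) ≤ lam ^ n * dist (x 0) (x 1)) ∧
      CauchySeq x := by
  have hstep : ∀ n : ℕ, dist (x (n + 1)) (x (n + 2)) ≤ lam * dist (x n) (x (n + 1)) := by
    intro n
    have h1 : x (n + 1) = T (x n) := hx n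
    have h2 : x (n + 2) = T (x (n + 1)) := hx (n + 1)
    have hd : 0 < dist (x n) (x (n + 1)) := by
      rw [dist_pos, h1]
      exact fun h => hnf n h.symm
    have key := hT (x n) (x (n + 1)) (hnf n) (hnf (n + 1))
    rw [← h1] at key
    have heq : lam * dist (x n) (x (n+1)) ^ α * dist (x n) (x (n+1)) ^ (1 - α)
        = lam * dist (x n) (x (n + 1)) := by
      rw [mul_assoc, ← Real.rpow_add hd]; norm_num
    rw [h1, h2, ← h1]
    rw [heq] at key
    exact key
  have hgeo : ∀ n : ℕ, dist (x n) (x (n + 1)) ≤ lam ^ n * dist (x 0) (x 1) := by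
    intro n
    induction n with
    | zero => simp
    | succ k ih =>
        calc dist (x (k + 1)) (x (k + 2)) ≤ lam * dist (x k) (x (k + 1)) := hstep k
          _ ≤ lam * (lam ^ k * dist (x 0) (x 1)) := by
              exact mul_le_mul_of_nonneg_left ih hlam.1
          _ = lam ^ (k + 1) * dist (x 0) (x 1) := by ring
  refine ⟨hgeo, ?_⟩
  apply cauchySeq_of_le_geometric lam (dist (x 0) (x 1)) hlam.2
  intro n
  rw [mul_comm]
  exact hgeo n
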